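/- arXiv:1009.0854 — 2 statements merged into one kernel-verified Lean document; each statement's English description precedes it below -/
import Mathlib

section
/- For all real R, G, B with R > B and G > B (not all equal), arccos(0.5((R−G)+(R−B))/√((R−G)² + (R−B)(G−B))) = π/3 + arctan(√3(G−R)/((G−B)+(R−B))). -/
/-! With `t = √3 (G - R) / ((G - B) + (R - B))`, the addition formula gives
`cos (π / 3 + arctan t) = (1 - √3 t) / (2 √(1 + t²))`, which simplifies to the argument of `arccos`.
Since `G ≥ B` forces `t ≥ -√3`, the angle `π / 3 + arctan t` lies in `[0, π]`, where `arccos` inverts `cos`. -/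

open Real

theorem cos_pi_div_three_add_arctan (t : ℝ) :
    cos (π / 3 + arctan t) = (1 - √3 * t) / (2 * √(1 + t ^ 2)) := by
  rw [cos_add, cos_pi_div_three, sin_pi_div_three, cos_arctan, sin_arctan]
  field_simp

theorem arccos_eq_pi_div_three_add_arctan {t : ℝ} (ht : -√3 ≤ t) :
    arccos ((1 - √3 * t) / (2 * √(1 + t ^ 2))) = π / 3 + arctan t := by
  have hlow : -(π / 3) ≤ arctan t := by
    rw [← arctan_sqrt_three, ← arctan_neg]
    exact arctan_strictMono.monotone ht
  rw [← cos_pi_div_three_add_arctan, arccos_cos (by linarith)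
    (by linarith [arctan_lt_pi_div_two t, pi_pos])]

theorem kender_hue_sector_RB_GB_general (R G B : ℝ)
    (hGB : G > B)
    (hden : G - B + (R - B) > 0) :
    Real.arccos (0.5 * ((R - G) + (R - B)) / Real.sqrt ((R - G) ^ 2 + (R - B) * (G - B)))
      = Real.pi / 3 + Real.arctan (Real.sqrt 3 * (G - R) / ((G - B) + (R - B))) := by
  have h3 : √3 ^ 2 = 3 := sq_sqrt (by norm_num)
  have hsqrt : √(1 + (√3 * (G - R) / (G - B + (R - B))) ^ 2)
      = 2 * √((R - G) ^ 2 + (R - B) * (G - B)) / (G - B + (R - B)) := by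
    rw [show 1 + (√3 * (G - R) / (G - B + (R - B))) ^ 2
        = (2 / (G - B + (R - B))) ^ 2 * ((R - G) ^ 2 + (R - B) * (G - B)) by
      field_simp; linear_combination (G - R) ^ 2 * h3,
      sqrt_mul (by positivity), sqrt_sq (by positivity)]
    ring
  have ht : -√3 ≤ √3 * (G - R) / (G - B + (R - B)) := by
    rw [le_div_iff₀ hden]
    nlinarith [sqrt_nonneg 3]
  -- `4 ((R - G) ^ 2 + (R - B) * (G - B)) = 3 (R - G) ^ 2 + (G - B + (R - B)) ^ 2`
  have hQ : 0 < √((R - G) ^ 2 + (R - B) * (G - B)) :=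
    sqrt_pos.mpr (by nlinarith [sq_nonneg (R - G)])
  rw [← arccos_eq_pi_div_three_add_arctan ht, hsqrt]
  congr 1
  field_simp
  linear_combination (G - R) * h3

theorem kender_hue_sector_RB_GB (R G B : ℝ)
    (hRB : R > B) (hGB : G > B) (hne : ¬(R = G ∧ G = B))
    (hdisc : (R - G) ^ 2 + (R - B) * (G - B) > 0)
    (hden : G - B + (R - B) > 0) :
    Real.arccos (0.5 * ((R - G) + (R - B)) / Real.sqrt ((R - G) ^ 2 + (R - B) * (G - B)))
      = Real.pi / 3 + Real.arctan (Real.sqrt 3 * (G - R) / ((G - B) + (R - B))) :=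
  kender_hue_sector_RB_GB_general R G B hGB hden
end

section
/- There exist polynomials p of degree at most 2 and q of degree at most 2 with q(x) > 0 for all x in [0.008856, 1], such that sup_{x∈[0.008856,1]} |x^{1/3} − p(x)/q(x)| ≤ 3·10⁻³. -/
set_option maxHeartbeats 1000000

theorem cbrt_rational_approx :
    ∃ p q : Polynomial ℝ, p.natDegree ≤ 2 ∧ q.natDegree ≤ 2 ∧
      (∀ x ∈ Set.Icc (0.008856 : ℝ) 1, q.eval x > 0) ∧
      ∀ x ∈ Set.Icc (0.008856 : ℝ) 1,
        |x ^ ((1:ℝ) / 3) - p.eval x / q.eval x| ≤ 3e-3 := by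
  refine ⟨Polynomial.C 6.309655e-3 + Polynomial.C 5.785782e-1 * Polynomial.X
      + Polynomial.C 1.591005 * Polynomial.X ^ 2,
    Polynomial.C 4.482646e-2 + Polynomial.C 1.175862 * Polynomial.X
      + Polynomial.C 9.596879e-1 * Polynomial.X ^ 2, ?_, ?_, ?_, ?_⟩
  · compute_degree
  · compute_degree
  · intro x hx
    obtain ⟨hx1, hx2⟩ := hx
    simp only [Polynomial.eval_add, Polynomial.eval_mul, Polynomial.eval_pow,
      Polynomial.eval_C, Polynomial.eval_X]
    nlinarith [sq_nonneg x]
  · intro x hx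
    obtain ⟨hx1, hx2⟩ := hx
    have hx0 : (0:ℝ) < x := by linarith
    simp only [Polynomial.eval_add, Polynomial.eval_mul, Polynomial.eval_pow,
      Polynomial.eval_C, Polynomial.eval_X]
    set t : ℝ := x ^ ((1:ℝ)/3) with htdef
    have ht0 : 0 ≤ t := Real.rpow_nonneg hx0.le _
    have ht3 : t ^ 3 = x := by
      rw [htdef, ← Real.rpow_natCast (x ^ ((1:ℝ)/3)) 3, ← Real.rpow_mul hx0.le]
      norm_num
    have ht1 : t ≤ 1 := Real.rpow_le_one hx0.le hx2 (by norm_num)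
    have hc : (0.2068:ℝ) ≤ t := by
      nlinarith [ht3, hx1, sq_nonneg (t + 0.2068), sq_nonneg (t - 0.2068), ht0]
    have hQx : (0:ℝ) < 4.482646e-2 + 1.175862 * x + 9.596879e-1 * x ^ 2 := by
      nlinarith [sq_nonneg x]
    have hm2 : t ^ 2 ≤ 1 := pow_le_one₀ ht0 ht1
    have hm3 : t ^ 3 ≤ 1 := pow_le_one₀ ht0 ht1
    have hm4 : t ^ 4 ≤ 1 := pow_le_one₀ ht0 ht1
    have hm5 : t ^ 5 ≤ 1 := pow_le_one₀ ht0 ht1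
    have hm6 : t ^ 6 ≤ 1 := pow_le_one₀ ht0 ht1
    have hm7 : t ^ 7 ≤ 1 := pow_le_one₀ ht0 ht1
    have hp2 : (0:ℝ) ≤ t ^ 2 := by positivity
    have hp3 : (0:ℝ) ≤ t ^ 3 := by positivity
    have hp4 : (0:ℝ) ≤ t ^ 4 := by positivity
    have hp5 : (0:ℝ) ≤ t ^ 5 := by positivity
    have hp6 : (0:ℝ) ≤ t ^ 6 := by positivity
    have hp7 : (0:ℝ) ≤ t ^ 7 := by positivity
    -- upper bound: P ≤ (t + 3e-3) * Q
    have hupper : 6.309655e-3 + 5.785782e-1 * x + 1.591005 * x ^ 2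
        ≤ (t + 3e-3) * (4.482646e-2 + 1.175862 * x + 9.596879e-1 * x ^ 2) := by
      rw [← ht3]
      have f1 : (0:ℝ) ≤ t - 0.20364914 := by linarith
      have f2 : (0:ℝ) ≤ t + 0.85581701 := by linarith
      have f3 : (0:ℝ) ≤ t + 0.27878824 := by linarith
      have f4 : (0:ℝ) ≤ (t - 0.40742806) ^ 2 + 0.05083394 ^ 2 := by positivity
      have f5 : (0:ℝ) ≤ (t - 0.88546791) ^ 2 + 0.06352505 ^ 2 := by positivity
      have hX : (0:ℝ) ≤ (t - 0.20364914) * (t + 0.85581701) * (t + 0.27878824)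
          * ((t - 0.40742806) ^ 2 + 0.05083394 ^ 2)
          * ((t - 0.88546791) ^ 2 + 0.06352505 ^ 2) :=
        mul_nonneg (mul_nonneg (mul_nonneg (mul_nonneg f1 f2) f3) f4) f5
      linarith [hX, hm2, hm3, hm4, hm5, hm6, hm7, hp2, hp3, hp4, hp5, hp6, hp7]
    -- lower bound: (t - 3e-3) * Q ≤ P
    have hlower : (t - 3e-3) * (4.482646e-2 + 1.175862 * x + 9.596879e-1 * x ^ 2)
        ≤ 6.309655e-3 + 5.785782e-1 * x + 1.591005 * x ^ 2 := by
      rw [← ht3]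
      have f1 : (0:ℝ) ≤ 1.01162144 - t := by linarith
      have f2 : (0:ℝ) ≤ t + 0.85649267 := by linarith
      have f3 : (0:ℝ) ≤ t + 0.27924119 := by linarith
      have f4 : (0:ℝ) ≤ (t - 0.25997901) ^ 2 + 0.02598818 ^ 2 := by positivity
      have f5 : (0:ℝ) ≤ (t - 0.63249511) ^ 2 + 0.07240550 ^ 2 := by positivity
      have hX : (0:ℝ) ≤ (1.01162144 - t) * (t + 0.85649267) * (t + 0.27924119)
          * ((t - 0.25997901) ^ 2 + 0.02598818 ^ 2)
          * ((t - 0.63249511) ^ 2 + 0.07240550 ^ 2) :=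
        mul_nonneg (mul_nonneg (mul_nonneg (mul_nonneg f1 f2) f3) f4) f5
      linarith [hX, hm2, hm3, hm4, hm5, hm6, hm7, hp2, hp3, hp4, hp5, hp6, hp7]
    have hd1 : (6.309655e-3 + 5.785782e-1 * x + 1.591005 * x ^ 2)
        / (4.482646e-2 + 1.175862 * x + 9.596879e-1 * x ^ 2) ≤ t + 3e-3 :=
      (div_le_iff₀ hQx).mpr hupper
    have hd2 : t - 3e-3 ≤ (6.309655e-3 + 5.785782e-1 * x + 1.591005 * x ^ 2)
        / (4.482646e-2 + 1.175862 * x + 9.596879e-1 * x ^ 2) :=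
      (le_div_iff₀ hQx).mpr hlower
    rw [abs_le]
    constructor <;> linarith
end
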